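/- arXiv:math/0503698 — 7 statements merged into one kernel-verified Lean document; each statement's English description precedes it below -/
import Mathlib

section
/- If D is an acyclic directed multigraph on the vertex set of a graph G (with each edge of D corresponding to an edge of G) and p is a pebble distribution on G, then some ordering of the edges of D forms a valid sequence of pebbling moves if and only if every vertex v satisfies p(v) + indeg_D(v) - 2·outdeg_D(v) ≥ 0. -/
/-!
Executing a move `(u, v)` with `2 ≤ p u` turns the balance of `(u, v) :: D` under `p` into the
balance of `D` under the new distribution. Hence along a valid sequence the balance is the final
number of pebbles, so it is nonnegative. Conversely, in an acyclic `D` a minimal vertex for the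
reachability order has an outgoing edge `(u, v)` and no incoming one; nonnegative balance at `u`
then forces `2 ≤ p u`, so `(u, v)` can be played first, and induction applies to the rest of `D`.
-/

variable {V : Type*} [DecidableEq V]

/-- Result of a pebbling move `u → v`: remove two pebbles from `u`, add one to `v`. -/
def applyMove (p : V → ℕ) (u v : V) (x : V) : ℕ :=
  (if x = u then p x - 2 else p x) + (if x = v then 1 else 0)

/-- A list of moves is a valid sequence of pebbling moves from `p` in `G`. -/
def IsValidSeq (G : SimpleGraph V) : (V → ℕ) → List (V × V) → Prop
  | _, [] => True
  | p, m :: rest => G.Adj m.1 m.2 ∧ 2 ≤ p m.1 ∧ IsValidSeq G (applyMove p m.1 m.2) rest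

/-- The distribution after executing a sequence of pebbling moves. -/
def applySeq (p : V → ℕ) : List (V × V) → V → ℕ
  | [] => p
  | m :: rest => applySeq (applyMove p m.1 m.2) rest

/-- Indegree of a vertex in a directed multigraph (multiset of directed edges). -/
def indeg (D : Multiset (V × V)) (v : V) : ℕ :=
  Multiset.card (D.filter fun e => e.2 = v)

/-- Outdegree of a vertex in a directed multigraph. -/
def outdeg (D : Multiset (V × V)) (v : V) : ℕ :=
  Multiset.card (D.filter fun e => e.1 = v)

/-- balance(D,p,v) = p(v) + indeg_D(v) - 2·outdeg_D(v). -/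
def balance (D : Multiset (V × V)) (p : V → ℕ) (v : V) : ℤ :=
  (p v : ℤ) + (indeg D v : ℤ) - 2 * (outdeg D v : ℤ)

/-- `D` is orderable under `p`: some ordering of the edge multiset of `D`
is a valid sequence of pebbling moves. -/
def Orderable (G : SimpleGraph V) (D : Multiset (V × V)) (p : V → ℕ) : Prop :=
  ∃ σ : List (V × V), (σ : Multiset (V × V)) = D ∧ IsValidSeq G p σ

/-- A directed multigraph is acyclic if its edge relation admits no directed cycle. -/
def DAcyclic (D : Multiset (V × V)) : Prop :=
  ∀ v : V, ¬ Relation.TransGen (fun a b => (a, b) ∈ D) v v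

/-- The strongly connected component of `a` in the directed multigraph `D`. -/
def SCC (D : Multiset (V × V)) (a : V) : Set V :=
  {b | Relation.ReflTransGen (fun x y => (x, y) ∈ D) a b ∧
       Relation.ReflTransGen (fun x y => (x, y) ∈ D) b a}

lemma indeg_cons (e : V × V) (D : Multiset (V × V)) (x : V) :
    indeg (e ::ₘ D) x = indeg D x + if e.2 = x then 1 else 0 := by
  unfold indeg
  split_ifs with h <;> simp [h]

lemma outdeg_cons (e : V × V) (D : Multiset (V × V)) (x : V) :
    outdeg (e ::ₘ D) x = outdeg D x + if e.1 = x then 1 else 0 := by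
  unfold outdeg
  split_ifs with h <;> simp [h]

lemma balance_zero (p : V → ℕ) (x : V) : balance 0 p x = p x := by
  simp [balance, indeg, outdeg]

lemma cast_applyMove {p : V → ℕ} {u : V} (hu : 2 ≤ p u) (v x : V) :
    (applyMove p u v x : ℤ) = p x - (if u = x then 2 else 0) + if v = x then 1 else 0 := by
  unfold applyMove
  by_cases hxu : x = u
  · subst hxu
    push_cast [Nat.cast_sub hu]
    simp [eq_comm]
  · simp [hxu, Ne.symm hxu, eq_comm]

lemma balance_cons {p : V → ℕ} {u : V} (hu : 2 ≤ p u) (v : V) (D : Multiset (V × V))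
    (x : V) :
    balance ((u, v) ::ₘ D) p x = balance D (applyMove p u v) x := by
  simp only [balance, indeg_cons, outdeg_cons, cast_applyMove hu]
  split_ifs <;> push_cast <;> ring

lemma IsValidSeq.balance_nonneg {G : SimpleGraph V} :
    ∀ {p : V → ℕ} {σ : List (V × V)}, IsValidSeq G p σ →
      ∀ x, 0 ≤ balance (σ : Multiset (V × V)) p x
  | p, [], _, x => by simp [balance_zero]
  | p, (u, v) :: σ, ⟨_, hu, hσ⟩, x => by
    rw [← Multiset.cons_coe, balance_cons hu]
    exact hσ.balance_nonneg x

lemma Orderable.balance_nonneg {G : SimpleGraph V} {D : Multiset (V × V)} {p : V → ℕ}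
    (h : Orderable G D p) (x : V) : 0 ≤ balance D p x := by
  obtain ⟨σ, rfl, hσ⟩ := h
  exact hσ.balance_nonneg x

omit [DecidableEq V] in
lemma DAcyclic.of_le {D D' : Multiset (V × V)} (hac : DAcyclic D) (h : D' ≤ D) : DAcyclic D' :=
  fun v hv => hac v (Relation.TransGen.mono (fun _ _ hab => Multiset.mem_of_le h hab) v v hv)

lemma DAcyclic.exists_source {D : Multiset (V × V)} (hac : DAcyclic D) (hD : D ≠ 0) :
    ∃ e ∈ D, indeg D e.1 = 0 := by
  let R : V → V → Prop := Relation.TransGen fun a b => (a, b) ∈ D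
  let S : Finset V := D.toFinset.image Prod.fst
  have : IsTrans S (fun a b => R a b) := ⟨fun _ _ _ => Relation.TransGen.trans⟩
  have : Std.Irrefl (fun a b : S => R a b) := ⟨fun a => hac a⟩
  obtain ⟨e, he⟩ := Multiset.exists_mem_of_ne_zero hD
  have heS : e.1 ∈ S := Finset.mem_image_of_mem _ (Multiset.mem_toFinset.mpr he)
  have hwf : WellFounded fun a b : S => R a b := Finite.wellFounded_of_trans_of_irrefl _
  obtain ⟨⟨u, huS⟩, -, hmin⟩ := hwf.has_min Set.univ ⟨⟨e.1, heS⟩, trivial⟩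
  obtain ⟨f, hf, rfl⟩ := Finset.mem_image.mp huS
  refine ⟨f, Multiset.mem_toFinset.mp hf,
    Multiset.card_eq_zero.mpr <| Multiset.filter_eq_nil.mpr ?_⟩
  rintro ⟨a, b⟩ hab rfl
  have haS : a ∈ S := Finset.mem_image_of_mem _ (Multiset.mem_toFinset.mpr hab)
  exact hmin ⟨a, haS⟩ trivial (.single hab)

lemma two_le_of_balance_nonneg {D : Multiset (V × V)} {p : V → ℕ} {u v : V} (he : (u, v) ∈ D)
    (hu : indeg D u = 0) (hbal : 0 ≤ balance D p u) : 2 ≤ p u := by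
  have hout : 0 < outdeg D u :=
    Multiset.card_pos_iff_exists_mem.mpr ⟨_, Multiset.mem_filter.mpr ⟨he, rfl⟩⟩
  simp only [balance, hu] at hbal
  omega

lemma orderable_of_balance_nonneg {G : SimpleGraph V} {D : Multiset (V × V)} {p : V → ℕ}
    (hG : ∀ e ∈ D, G.Adj e.1 e.2) (hac : DAcyclic D) (hbal : ∀ x, 0 ≤ balance D p x) :
    Orderable G D p := by
  induction D using Multiset.strongInductionOn generalizing p with
  | ih D ih =>
    rcases eq_or_ne D 0 with rfl | hD
    · exact ⟨[], rfl, trivial⟩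
    obtain ⟨⟨u, v⟩, he, hsource⟩ := hac.exists_source hD
    have hu := two_le_of_balance_nonneg he hsource (hbal u)
    have hcons : (u, v) ::ₘ D.erase (u, v) = D := Multiset.cons_erase he
    obtain ⟨σ, hσ, hvalid⟩ := ih _ (Multiset.erase_lt.mpr he)
      (fun e he' => hG e (Multiset.mem_of_mem_erase he')) (hac.of_le (Multiset.erase_le _ _))
      fun x => by rw [← balance_cons hu, hcons]; exact hbal x
    refine ⟨(u, v) :: σ, ?_, hG _ he, hu, hvalid⟩
    rw [← Multiset.cons_coe, hσ, hcons]

/-- Acyclic Orderability Characterization. -/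
theorem acyclic_orderability (G : SimpleGraph V) (D : Multiset (V × V)) (p : V → ℕ)
    (hG : ∀ e ∈ D, G.Adj e.1 e.2) (hac : DAcyclic D) :
    Orderable G D p ↔ ∀ v : V, 0 ≤ balance D p v :=
  ⟨Orderable.balance_nonneg, orderable_of_balance_nonneg hG hac⟩
end

section
/- Let D be a connected directed multigraph with at least one edge, with a pebble distribution p such that every vertex has nonnegative balance. If no pebbling move described by an edge of D can be made (i.e., every vertex with positive outdegree has at most one pebble), then D is a directed cycle and every vertex has exactly one pebble. -/
variable {V : Type*} [DecidableEq V]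

/-!
At a vertex with an outgoing edge no move is possible, so it holds at most one pebble and
nonnegative balance gives `indeg ≥ 2 * outdeg - 1 ≥ outdeg`; isolated vertices satisfy this
trivially. Since both degree sums count the edges, `indeg = outdeg` everywhere, and then the
balance forces `outdeg = 1` and one pebble at every vertex (all vertices are non-isolated by
connectivity). Thus `D` is the graph of a map `f` that is surjective, hence bijective, and weak
connectivity makes the whole vertex set a single orbit of `f`: listing that orbit gives the cycle.
-/

namespace List

variable {α : Type*}

theorem map_iterate (f : α → α) (a : α) (n : ℕ) :
    (iterate f a n).map f = iterate f (f a) n := by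
  apply ext_getElem <;> simp [← Function.iterate_succ_apply' f, Function.iterate_succ_apply]

theorem nodup_iterate_minimalPeriod (f : α → α) (a : α) :
    (iterate f a (Function.minimalPeriod f a)).Nodup := by
  rw [← range_map_iterate]
  exact (nodup_range).map_on fun i hi j hj =>
    Function.iterate_injOn_Iio_minimalPeriod (by simpa using hi) (by simpa using hj)

theorem mem_iterate_minimalPeriod {f : α → α} {a : α} (ha : a ∈ Function.periodicPts f) (k : ℕ) :
    f^[k] a ∈ iterate f a (Function.minimalPeriod f a) :=
  mem_iterate.2 ⟨k % _, Nat.mod_lt _ (Function.minimalPeriod_pos_of_mem_periodicPts ha),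
    (Function.iterate_mod_minimalPeriod_eq).symm⟩

theorem rotate_one_iterate_minimalPeriod (f : α → α) (a : α) :
    (iterate f a (Function.minimalPeriod f a)).rotate 1 =
      (iterate f a (Function.minimalPeriod f a)).map f := by
  have hper := Function.iterate_minimalPeriod (f := f) (x := a)
  generalize Function.minimalPeriod f a = n at hper
  cases n with
  | zero => rfl
  | succ n =>
    rw [map_iterate, iterate.eq_2 f a n, rotate_cons_succ, rotate_zero, iterate_add f (f a) n 1]
    simp [← Function.iterate_succ_apply, hper]

end List

theorem Function.Injective.exists_iterate_eq_of_reflTransGen {α : Type*} [Finite α] {f : α → α}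
    (hf : Injective f) {a b : α} (h : Relation.ReflTransGen (fun x y => y = f x ∨ x = f y) a b) :
    ∃ k, f^[k] a = b := by
  induction h with
  | refl => exact ⟨0, rfl⟩
  | tail _ hstep ih =>
    obtain ⟨k, rfl⟩ := ih
    rcases hstep with rfl | hback
    · exact ⟨k + 1, iterate_succ_apply' f k a⟩
    · have hpos := minimalPeriod_pos_of_mem_periodicPts (hf.mem_periodicPts a)
      refine ⟨k + minimalPeriod f a - 1, hf ?_⟩
      rw [← hback, ← iterate_succ_apply' f,
        show (k + minimalPeriod f a - 1).succ = k + minimalPeriod f a by omega,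
        iterate_add_minimalPeriod_eq]

section Degrees

variable (D : Multiset (V × V))

theorem outdeg_eq_count (v : V) : outdeg D v = (D.map Prod.fst).count v := by
  simp only [outdeg, Multiset.count_map, eq_comm]

theorem indeg_eq_count (v : V) : indeg D v = (D.map Prod.snd).count v := by
  simp only [indeg, Multiset.count_map, eq_comm]

theorem outdeg_pos_iff {v : V} : 0 < outdeg D v ↔ v ∈ D.map Prod.fst := by
  rw [outdeg_eq_count, Multiset.count_pos]

theorem indeg_pos_iff {v : V} : 0 < indeg D v ↔ v ∈ D.map Prod.snd := by
  rw [indeg_eq_count, Multiset.count_pos]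

theorem sum_outdeg_eq_card [Fintype V] : ∑ v, outdeg D v = Multiset.card D := by
  simp only [outdeg_eq_count, Multiset.sum_count_eq_card (fun v _ => Finset.mem_univ v),
    Multiset.card_map]

theorem sum_indeg_eq_card [Fintype V] : ∑ v, indeg D v = Multiset.card D := by
  simp only [indeg_eq_count, Multiset.sum_count_eq_card (fun v _ => Finset.mem_univ v),
    Multiset.card_map]

theorem indeg_eq_outdeg_of_forall_outdeg_le [Fintype V] (h : ∀ v, outdeg D v ≤ indeg D v)
    (v : V) : indeg D v = outdeg D v :=
  ((Finset.sum_eq_sum_iff_of_le fun v _ => h v).1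
    (by rw [sum_outdeg_eq_card, sum_indeg_eq_card]) v (Finset.mem_univ v)).symm

theorem outdeg_pos_or_indeg_pos_of_reflTransGen {a b : V}
    (h : Relation.ReflTransGen (fun x y => (x, y) ∈ D ∨ (y, x) ∈ D) a b)
    (ha : 0 < outdeg D a ∨ 0 < indeg D a) : 0 < outdeg D b ∨ 0 < indeg D b := by
  rcases h.cases_tail with rfl | ⟨c, -, hc | hc⟩
  · exact ha
  · exact Or.inr ((indeg_pos_iff D).2 (Multiset.mem_map_of_mem Prod.snd hc))
  · exact Or.inl ((outdeg_pos_iff D).2 (Multiset.mem_map_of_mem Prod.fst hc))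

theorem exists_forall_mem_snd_eq_of_outdeg_eq_one (h : ∀ v, outdeg D v = 1) :
    ∃ f : V → V, ∀ e ∈ D, e.2 = f e.1 := by
  choose out hout using fun v => Multiset.card_eq_one.1 (h v)
  refine ⟨fun v => (out v).2, fun e he => ?_⟩
  have : e ∈ D.filter (·.1 = e.1) := Multiset.mem_filter.2 ⟨he, rfl⟩
  rw [hout, Multiset.mem_singleton] at this
  exact congrArg Prod.snd this

theorem eq_map_of_outdeg_eq_one {f : V → V} (h : ∀ v, outdeg D v = 1) (hf : ∀ e ∈ D, e.2 = f e.1)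
    {vs : List V} (hnodup : vs.Nodup) (hmem : ∀ v, v ∈ vs) :
    D = (vs.map fun v => (v, f v) : List (V × V)) := by
  have hsrc : D.map Prod.fst = vs := Multiset.ext.2 fun v => by
    rw [← outdeg_eq_count, h, Multiset.coe_count, List.count_eq_one_of_mem hnodup (hmem v)]
  calc D = D.map fun e => (e.1, f e.1) := by
        conv_lhs => rw [← Multiset.map_id D]
        exact Multiset.map_congr rfl fun e he => Prod.ext rfl (hf e he)
    _ = (vs.map fun v => (v, f v) : List (V × V)) := by
        rw [← Multiset.map_coe, ← hsrc, Multiset.map_map]; rfl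

theorem exists_cycle_of_outdeg_eq_one [Finite V] [Nonempty V]
    (hconn : ∀ a b : V, Relation.ReflTransGen (fun x y => (x, y) ∈ D ∨ (y, x) ∈ D) a b)
    (hout : ∀ v, outdeg D v = 1) (hin : ∀ v, 0 < indeg D v) :
    ∃ vs : List V, vs.Nodup ∧ (∀ v : V, v ∈ vs) ∧
      D = ((vs.zip (vs.rotate 1) : List (V × V)) : Multiset (V × V)) := by
  obtain ⟨f, hf⟩ := exists_forall_mem_snd_eq_of_outdeg_eq_one D hout
  have hsurj : Function.Surjective f := fun w => by
    obtain ⟨e, he, rfl⟩ := Multiset.mem_map.1 ((indeg_pos_iff D).1 (hin w))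
    exact ⟨e.1, (hf e he).symm⟩
  have hinj := hsurj.bijective_of_finite.1
  obtain ⟨a⟩ := ‹Nonempty V›
  set vs := List.iterate f a (Function.minimalPeriod f a)
  have hmem (v : V) : v ∈ vs := by
    obtain ⟨k, rfl⟩ := hinj.exists_iterate_eq_of_reflTransGen <|
      Relation.ReflTransGen.mono (fun x y => Or.imp (hf (x, y)) (hf (y, x))) _ _ (hconn a v)
    exact List.mem_iterate_minimalPeriod (hinj.mem_periodicPts a) k
  refine ⟨vs, List.nodup_iterate_minimalPeriod f a, hmem, ?_⟩
  have hzip : vs.zip (vs.map f) = vs.map fun v => (v, f v) := by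
    simpa using List.zip_map' (f := id) (g := f) (l := vs)
  rw [List.rotate_one_iterate_minimalPeriod, hzip]
  exact eq_map_of_outdeg_eq_one D hout hf (List.nodup_iterate_minimalPeriod f a) hmem

end Degrees

section Stuck

variable {D : Multiset (V × V)} {p : V → ℕ} {v : V}

theorem outdeg_le_indeg_of_stuck (hbal : 0 ≤ balance D p v)
    (hstuck : 0 < outdeg D v → p v ≤ 1) : outdeg D v ≤ indeg D v := by
  unfold balance at hbal
  rcases Nat.eq_zero_or_pos (outdeg D v) with h | h
  · omega
  · have := hstuck h
    omega

theorem outdeg_eq_one_and_eq_one_of_stuck (hbal : 0 ≤ balance D p v)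
    (hstuck : 0 < outdeg D v → p v ≤ 1) (hdeg : indeg D v = outdeg D v) (hpos : 0 < outdeg D v) :
    outdeg D v = 1 ∧ p v = 1 := by
  unfold balance at hbal
  have := hstuck hpos
  omega

end Stuck

/-- A connected directed multigraph with at least one edge, nonnegative balances, and
no available pebbling move must be a directed cycle with exactly one pebble per vertex. -/
theorem stuck_configuration (D : Multiset (V × V)) (p : V → ℕ)
    (hconn : ∀ a b : V, Relation.ReflTransGen (fun x y => (x, y) ∈ D ∨ (y, x) ∈ D) a b)
    (hedge : 1 ≤ Multiset.card D)
    (hbal : ∀ v : V, 0 ≤ balance D p v)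
    (hstuck : ∀ v : V, 0 < outdeg D v → p v ≤ 1) :
    (∃ vs : List V, vs.Nodup ∧ (∀ v : V, v ∈ vs) ∧
      D = ((vs.zip (vs.rotate 1) : List (V × V)) : Multiset (V × V))) ∧
    (∀ v : V, p v = 1) := by
  obtain ⟨e, he⟩ := Multiset.card_pos_iff_exists_mem.1 hedge
  have hactive (v : V) : 0 < outdeg D v ∨ 0 < indeg D v :=
    outdeg_pos_or_indeg_pos_of_reflTransGen D (hconn e.1 v)
      (Or.inl ((outdeg_pos_iff D).2 (Multiset.mem_map_of_mem Prod.fst he)))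
  let : Fintype V := Fintype.ofMultiset (D.map Prod.fst + D.map Prod.snd) fun v =>
    Multiset.mem_add.2 ((hactive v).imp (outdeg_pos_iff D).1 (indeg_pos_iff D).1)
  have hdeg := indeg_eq_outdeg_of_forall_outdeg_le D fun v =>
    outdeg_le_indeg_of_stuck (hbal v) (hstuck v)
  have hpos (v : V) : 0 < outdeg D v := (hactive v).elim id (hdeg v ▸ ·)
  have hone (v : V) := outdeg_eq_one_and_eq_one_of_stuck (hbal v) (hstuck v) (hdeg v) (hpos v)
  have : Nonempty V := ⟨e.1⟩
  exact ⟨exists_cycle_of_outdeg_eq_one D hconn (fun v => (hone v).1) (fun v => hdeg v ▸ hpos v),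
    fun v => (hone v).2⟩
end

section
/- Let D be an acyclic directed multigraph orderable under p, and let w be any vertex. Then there exists a subgraph D' ⊆ D that is orderable under p with balance(D',p,w) ≥ balance(D,p,w) + 2·outdeg_D(w) ≥ p(w) + indeg_D(w). Moreover, if outdeg_D(w) > 0, D' can be taken to be a proper subgraph of D. -/
variable {V : Type*} [DecidableEq V]

/-!
Let `R` be the set of vertices reachable from `w` in `D`, and let `D'` consist of the edges of `D`
whose tail lies outside `R`. Since `R` is closed under the edges of `D`, deleting the moves out of
`R` from a valid ordering of `D` never lowers the pebble count of a vertex outside `R`, so `D'` is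
orderable. No edge leaves `w` in `D'`, while by acyclicity no edge into `w` starts in `R`; hence
`balance(D',p,w) = p(w) + indeg_D(w) = balance(D,p,w) + 2·outdeg_D(w)`.
-/

open Relation

theorem IsValidSeq.filter_source_not {G : SimpleGraph V} {R : V → Prop} [DecidablePred R] :
    ∀ {σ : List (V × V)} {p p' : V → ℕ}, IsValidSeq G p σ → (∀ m ∈ σ, R m.1 → R m.2) →
      (∀ v, ¬ R v → p v = p' v) → IsValidSeq G p' (σ.filter fun m => ¬ R m.1)
  | [], _, _, _, _, _ => trivial
  | m :: σ, p, p', ⟨hadj, htwo, hrest⟩, hR, hpp => by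
    have hRσ : ∀ m ∈ σ, R m.1 → R m.2 := fun m' hm' => hR m' (List.mem_cons_of_mem _ hm')
    by_cases hm : R m.1
    · have hm₂ : R m.2 := hR m List.mem_cons_self hm
      rw [List.filter_cons_of_neg (by simpa using hm)]
      refine hrest.filter_source_not hRσ fun v hv => ?_
      have hv₁ : v ≠ m.1 := fun e => hv (e ▸ hm)
      have hv₂ : v ≠ m.2 := fun e => hv (e ▸ hm₂)
      simp [applyMove, hv₁, hv₂, hpp v hv]
    · rw [List.filter_cons_of_pos (by simpa using hm)]
      exact ⟨hadj, hpp _ hm ▸ htwo,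
        hrest.filter_source_not hRσ fun v hv => by simp [applyMove, hpp v hv]⟩

theorem Orderable.filter_source_not {G : SimpleGraph V} {D : Multiset (V × V)} {p : V → ℕ}
    {R : V → Prop} [DecidablePred R] (h : Orderable G D p) (hR : ∀ e ∈ D, R e.1 → R e.2) :
    Orderable G (D.filter fun e => ¬ R e.1) p := by
  obtain ⟨σ, rfl, hσ⟩ := h
  exact ⟨σ.filter fun m => ¬ R m.1, by simp [Multiset.filter_coe],
    hσ.filter_source_not (fun m hm => hR m (Multiset.mem_coe.2 hm)) fun _ _ => rfl⟩

theorem outdeg_filter_source_not_eq_zero {D : Multiset (V × V)} {R : V → Prop} [DecidablePred R]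
    {w : V} (hw : R w) : outdeg (D.filter fun e => ¬ R e.1) w = 0 := by
  rw [outdeg, Multiset.filter_filter, Multiset.card_eq_zero, Multiset.filter_eq_nil]
  rintro e - ⟨he, hR⟩
  exact hR (he ▸ hw)

theorem indeg_filter_source_not {D : Multiset (V × V)} {R : V → Prop} [DecidablePred R] {w : V}
    (h : ∀ e ∈ D, e.2 = w → ¬ R e.1) : indeg (D.filter fun e => ¬ R e.1) w = indeg D w := by
  rw [indeg, indeg, Multiset.filter_filter]
  exact congrArg _ <| Multiset.filter_congr fun e he => and_iff_left_of_imp (h e he)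

/-- For an acyclic orderable `D` and any vertex `w` there is an orderable subgraph `D' ⊆ D`
with `balance(D',p,w) ≥ balance(D,p,w) + 2·outdeg_D(w) ≥ p(w) + indeg_D(w)`; if
`outdeg_D(w) > 0` then `D'` may be taken to be a proper subgraph. -/
theorem large_outdegree_many_pebbles (G : SimpleGraph V) (D : Multiset (V × V)) (p : V → ℕ)
    (hac : DAcyclic D) (h : Orderable G D p) (w : V) :
    ∃ D' ≤ D, Orderable G D' p ∧
      balance D p w + 2 * (outdeg D w : ℤ) ≤ balance D' p w ∧
      (p w : ℤ) + (indeg D w : ℤ) ≤ balance D p w + 2 * (outdeg D w : ℤ) ∧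
      (0 < outdeg D w → D' ≠ D) := by
  classical
  set R : V → Prop := ReflTransGen (fun a b => (a, b) ∈ D) w
  have hout : outdeg (D.filter fun e => ¬ R e.1) w = 0 :=
    outdeg_filter_source_not_eq_zero ReflTransGen.refl
  have hin : indeg (D.filter fun e => ¬ R e.1) w = indeg D w :=
    indeg_filter_source_not fun e he hew hwe => hac w (TransGen.tail' hwe (hew ▸ he))
  refine ⟨D.filter fun e => ¬ R e.1, Multiset.filter_le _ _,
    h.filter_source_not fun _ he hr => ReflTransGen.tail hr he,
    ?_, ?_, fun hpos hD => ?_⟩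
  · simp [balance, hout, hin]
  · simp [balance]
  · rw [hD] at hout
    omega
end

section
/- (Greedy Tree Lemma) In a tree T with pebble distribution p and target vertex r, the maximum number of pebbles that can be placed on r by any sequence of pebbling moves is achieved by the greedy strategy that repeatedly makes arbitrary pebbling moves uv satisfying d(v,r) < d(u,r) until none are possible. -/
variable {V : Type*} [DecidableEq V]

/-!
Induction on the greedy sequence. When it is stuck, every vertex other than `r` holds at most
one pebble, and no sequence of moves increases `p r + ∑ x ≠ r, (p x - 1)`, so none brings more
than `p r` pebbles to `r`. Otherwise its first move `a → b` goes towards `r`, and any sequence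
played from `p` can be simulated after that move, bringing at least as many pebbles to `r`:
the two pebbles missing at `a` are made up for by the extra pebble at `b`, which lies on the
path from `a` to `r`. Moves that the simulation cannot afford are skipped; in a tree this only
shifts the deficit to vertices whose path to `r` still passes through `b`.
-/

namespace SimpleGraph

variable {α : Type*} {G : SimpleGraph α} {u r : α}

lemma Connected.exists_adj_dist_add_one_eq (hG : G.Connected) (hu : u ≠ r) :
    ∃ w, G.Adj u w ∧ G.dist w r + 1 = G.dist u r := by
  obtain ⟨P, hP⟩ := hG.exists_walk_length_eq_dist u r
  cases P with
  | nil => exact absurd rfl hu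
  | @cons _ w _ hadj Q =>
    refine ⟨w, hadj, le_antisymm ?_ ?_⟩
    · rw [← hP, Walk.length_cons]
      exact Nat.add_le_add_right (dist_le Q) 1
    · have huw : G.dist u w = 1 := dist_eq_one_iff_adj.mpr hadj
      have : G.dist u r ≤ G.dist u w + G.dist w r := hG.dist_triangle
      omega

/-- Prefixing geodesics from `b` and from `c` to `r` by `u` gives two geodesics, hence two paths,
from `u` to `r`; in a tree they coincide. -/
lemma IsTree.eq_of_adj_of_dist_add_one_eq (hT : G.IsTree) {b c : α} (hb : G.Adj u b)
    (hc : G.Adj u c) (hdb : G.dist b r + 1 = G.dist u r) (hdc : G.dist c r + 1 = G.dist u r) :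
    b = c := by
  obtain ⟨Pb, hPb⟩ := hT.connected.exists_walk_length_eq_dist b r
  obtain ⟨Pc, hPc⟩ := hT.connected.exists_walk_length_eq_dist c r
  have hb' := (Walk.cons hb Pb).isPath_of_length_eq_dist (by rw [Walk.length_cons, hPb, hdb])
  have hc' := (Walk.cons hc Pc).isPath_of_length_eq_dist (by rw [Walk.length_cons, hPc, hdc])
  have := (hT.isAcyclic.subsingleton_path u r).elim ⟨_, hb'⟩ ⟨_, hc'⟩
  simpa using congrArg (fun P : G.Path u r => (P : G.Walk u r).snd) this

lemma IsTree.dist_add_dist_of_adj (hT : G.IsTree) {b s : α} (hb : G.Adj u b) (hsu : s ≠ u)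
    (hs : G.dist u s + G.dist s r = G.dist u r) :
    G.dist b s + G.dist s r = G.dist b r := by
  have hbs : G.dist b s ≤ G.dist b u + G.dist u s := hT.connected.dist_triangle
  have hbr : G.dist b r ≤ G.dist b s + G.dist s r := hT.connected.dist_triangle
  have hbu : G.dist b u = 1 := dist_eq_one_iff_adj.mpr hb.symm
  rcases hT.dist_eq_dist_add_one_of_adj r hb with hcloser | hfarther
  · -- the neighbour of `u` closer to `r` is the first step of a geodesic from `u` to `s`
    obtain ⟨c, hc, hcs⟩ := hT.connected.exists_adj_dist_add_one_eq hsu.symm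
    have hcr : G.dist c r ≤ G.dist c s + G.dist s r := hT.connected.dist_triangle
    have hur : G.dist u r ≤ G.dist u c + G.dist c r := hT.connected.dist_triangle
    have huc : G.dist u c = 1 := dist_eq_one_iff_adj.mpr hc
    rw [dist_comm, dist_comm (u := r)] at hcloser
    obtain rfl : b = c := hT.eq_of_adj_of_dist_add_one_eq hb hc hcloser.symm (by omega)
    omega
  · rw [dist_comm, dist_comm (u := r)] at hfarther
    omega

end SimpleGraph

open SimpleGraph

section Pebbling

variable {G : SimpleGraph V} {p q : V → ℕ} {a b r : V}

lemma applyMove_mono (h : q ≤ p) (a b : V) : applyMove q a b ≤ applyMove p a b := by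
  intro x
  have hx : q x ≤ p x := h x
  simp only [applyMove]
  split_ifs <;> omega

lemma applySeq_mono (h : q ≤ p) (ρ : List (V × V)) : applySeq q ρ ≤ applySeq p ρ := by
  induction ρ generalizing q p with
  | nil => exact h
  | cons m ρ ih => exact ih (applyMove_mono h m.1 m.2)

lemma IsValidSeq.mono {ρ : List (V × V)} (h : q ≤ p) (hq : IsValidSeq G q ρ) :
    IsValidSeq G p ρ := by
  induction ρ generalizing q p with
  | nil => trivial
  | cons m ρ ih =>
    obtain ⟨hadj, h2, hρ⟩ := hq
    exact ⟨hadj, h2.trans (h m.1), ih (applyMove_mono h m.1 m.2) hρ⟩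

lemma applyMove_add_le_applyMove_add {f g : V → ℕ} (ha : 2 ≤ q a) (h : q + f ≤ p + g) :
    applyMove q a b + f ≤ applyMove p a b + g := by
  intro x
  have hx : q x + f x ≤ p x + g x := h x
  have ha' : q a + f a ≤ p a + g a := h a
  simp only [Pi.add_apply, applyMove]
  split_ifs <;> subst_vars <;> omega

/-- Moves of `ρ` are replayed from `p`, except a move out of `z` that `p` cannot afford: skipping
it carries the deficit (now of one pebble) to the head of the move, which the tree structure
keeps on the far side of `s` from `r`, until it reaches `s` and is cancelled. -/
lemma SimpleGraph.IsTree.exists_isValidSeq_le_applySeq (hT : G.IsTree) {ρ : List (V × V)}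
    {z s : V} (hρ : IsValidSeq G q ρ) (hsz : s ≠ z) (hs : G.dist z s + G.dist s r = G.dist z r)
    (hpq : q + Pi.single s 1 ≤ p + Pi.single z 2) :
    ∃ ρ', IsValidSeq G p ρ' ∧ applySeq q ρ r ≤ applySeq p ρ' r := by
  induction ρ generalizing q p z with
  | nil =>
    refine ⟨[], trivial, ?_⟩
    have hzr : r ≠ z := by
      rintro rfl
      rw [dist_self] at hs
      exact hsz (hT.connected.dist_eq_zero_iff.mp (by omega))
    simpa [applySeq, hzr] using (Nat.le_add_right _ _).trans (hpq r)
  | cons m ρ ih =>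
    obtain ⟨a, b⟩ := m
    obtain ⟨hadj, ha, hρ⟩ := hρ
    dsimp only at ha
    by_cases hskip : a = z ∧ p z < 2
    · obtain ⟨rfl, hpa⟩ := hskip
      by_cases hbs : b = s
      · subst hbs
        have hq : applyMove q a b ≤ p := by
          intro x
          have hx := hpq x
          simp only [Pi.add_apply, Pi.single_apply] at hx
          simp only [applyMove]
          split_ifs at hx ⊢ <;> subst_vars <;> omega
        exact ⟨ρ, hρ.mono hq, applySeq_mono hq ρ r⟩
      · refine ih hρ (Ne.symm hbs) (hT.dist_add_dist_of_adj hadj hsz hs) fun x => ?_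
        have hx := hpq x
        simp only [Pi.add_apply, Pi.single_apply] at hx ⊢
        simp only [applyMove]
        split_ifs at hx ⊢ <;> subst_vars <;> omega
    · have hpa : 2 ≤ p a := by
        by_cases haz : a = z
        · subst haz
          exact not_lt.mp fun h => hskip ⟨rfl, h⟩
        · have := hpq a
          simp only [Pi.add_apply, Pi.single_eq_of_ne haz, add_zero] at this
          omega
      obtain ⟨ρ', hρ', hle⟩ := ih hρ hsz hs (applyMove_add_le_applyMove_add ha hpq)
      exact ⟨(a, b) :: ρ', ⟨hadj, hpa, hρ'⟩, hle⟩

lemma SimpleGraph.IsTree.exists_isValidSeq_applyMove_of_dist_lt (hT : G.IsTree)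
    {σ : List (V × V)} (hσ : IsValidSeq G p σ) (hab : G.Adj a b) (ha : 2 ≤ p a)
    (hba : G.dist b r < G.dist a r) :
    ∃ σ', IsValidSeq G (applyMove p a b) σ' ∧
      applySeq p σ r ≤ applySeq (applyMove p a b) σ' r := by
  have hs : G.dist a b + G.dist b r = G.dist a r := by
    have : G.dist a r ≤ G.dist a b + G.dist b r := hT.connected.dist_triangle
    rw [dist_eq_one_iff_adj.mpr hab] at this ⊢
    omega
  refine hT.exists_isValidSeq_le_applySeq hσ hab.ne.symm hs fun x => ?_
  simp only [Pi.add_apply, Pi.single_apply, applyMove]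
  split_ifs <;> subst_vars <;> omega

/-- `p r + ∑ x ∈ S \ {r}, (p x - 1)`: a move spends two pebbles and delivers one, so moves
inside `S` never increase it. -/
def pebblePotential (r : V) (S : Finset V) (p : V → ℕ) : ℕ :=
  ∑ x ∈ S, if x = r then p x else p x - 1

lemma pebblePotential_applyMove_le {S : Finset V} (ha : a ∈ S) (hb : b ∈ S)
    (h2 : 2 ≤ p a) : pebblePotential r S (applyMove p a b) ≤ pebblePotential r S p := by
  have key : ∀ x ∈ S, ((if x = r then applyMove p a b x else applyMove p a b x - 1) +
      if x = a then 1 else 0) ≤ (if x = r then p x else p x - 1) + if x = b then 1 else 0 := by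
    intro x _
    simp only [applyMove]
    split_ifs <;> subst_vars <;> omega
  have := Finset.sum_le_sum key
  simp only [Finset.sum_add_distrib, Finset.sum_ite_eq', ha, hb, if_true] at this
  exact Nat.le_of_add_le_add_right this

lemma pebblePotential_applySeq_le {S : Finset V} {σ : List (V × V)} (hσ : IsValidSeq G p σ)
    (hS : ∀ m ∈ σ, m.1 ∈ S ∧ m.2 ∈ S) :
    pebblePotential r S (applySeq p σ) ≤ pebblePotential r S p := by
  induction σ generalizing p with
  | nil => exact le_rfl
  | cons m σ ih =>
    obtain ⟨-, h2, hσ⟩ := hσ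
    obtain ⟨ha, hb⟩ := hS m List.mem_cons_self
    exact (ih hσ fun m' hm' => hS m' (List.mem_cons_of_mem _ hm')).trans
      (pebblePotential_applyMove_le ha hb h2)

lemma applySeq_le_of_forall_ne_le_one {σ : List (V × V)} (hσ : IsValidSeq G p σ)
    (hp : ∀ x, x ≠ r → p x ≤ 1) : applySeq p σ r ≤ p r := by
  let S := insert r (σ.flatMap fun m => [m.1, m.2]).toFinset
  have hr : r ∈ S := Finset.mem_insert_self r _
  have hS : ∀ m ∈ σ, m.1 ∈ S ∧ m.2 ∈ S := fun m hm => by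
    constructor <;> exact Finset.mem_insert_of_mem
      (List.mem_toFinset.mpr (List.mem_flatMap.mpr ⟨m, hm, by simp⟩))
  have hle : applySeq p σ r ≤ pebblePotential r S (applySeq p σ) := by
    simpa [pebblePotential] using Finset.single_le_sum
      (f := fun x => if x = r then applySeq p σ x else applySeq p σ x - 1)
      (fun _ _ => Nat.zero_le _) hr
  have heq : pebblePotential r S p = p r := by
    rw [pebblePotential, Finset.sum_eq_single_of_mem r hr fun x _ hx => by simp [hx, hp x hx]]
    simp
  exact hle.trans ((pebblePotential_applySeq_le hσ hS).trans heq.le)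

end Pebbling

/-- Greedy Tree Lemma: in a tree, any maximal greedy sequence of pebbling moves places
at least as many pebbles on the target `r` as any other sequence. -/
theorem greedy_tree_lemma (T : SimpleGraph V) (hT : T.IsTree) (p : V → ℕ) (r : V)
    (σ τ : List (V × V)) (hσ : IsValidSeq T p σ) (hτ : IsValidSeq T p τ)
    (hgreedy : ∀ m ∈ τ, T.dist m.2 r < T.dist m.1 r)
    (hstuck : ¬ ∃ u w : V, T.Adj u w ∧ 2 ≤ applySeq p τ u ∧ T.dist w r < T.dist u r) :
    applySeq p σ r ≤ applySeq p τ r := by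
  induction τ generalizing p σ with
  | nil =>
    refine applySeq_le_of_forall_ne_le_one hσ fun u hu => ?_
    obtain ⟨w, huw, hw⟩ := hT.connected.exists_adj_dist_add_one_eq hu
    by_contra hpu
    exact hstuck ⟨u, w, huw, by simp only [applySeq]; omega, by omega⟩
  | cons m τ ih =>
    obtain ⟨hadj, ha, hτ⟩ := hτ
    obtain ⟨σ', hσ', hle⟩ :=
      hT.exists_isValidSeq_applyMove_of_dist_lt hσ hadj ha (hgreedy m List.mem_cons_self)
    exact hle.trans
      (ih _ _ hσ' hτ (fun m' hm' => hgreedy m' (List.mem_cons_of_mem _ hm')) hstuck)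
end

section
/- For a connected graph G on n vertices with diameter d, the pebbling number satisfies π(G) ≤ (2^d - 1)·n + 1. -/
variable {V : Type*} [DecidableEq V]

/-
By pigeonhole, `(2^d - 1)·n + 1` pebbles on `n` vertices put at least `2^d` pebbles on some vertex
`v`. Moving pebbles greedily along a shortest path from `v` to `r`, which has length at most `d`,
halves the pile at each step and leaves a pebble on `r`.
-/

lemma applySeq_append (p : V → ℕ) (a b : List (V × V)) :
    applySeq p (a ++ b) = applySeq (applySeq p a) b := by
  induction a generalizing p with
  | nil => rfl
  | cons m rest ih => exact ih _

lemma IsValidSeq.append {G : SimpleGraph V} {p : V → ℕ} {a b : List (V × V)}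
    (ha : IsValidSeq G p a) (hb : IsValidSeq G (applySeq p a) b) :
    IsValidSeq G p (a ++ b) := by
  induction a generalizing p with
  | nil => exact hb
  | cons m rest ih => exact ⟨ha.1, ha.2.1, ih ha.2.2 hb⟩

lemma applySeq_replicate_target {u v : V} (huv : u ≠ v) (m : ℕ) (p : V → ℕ) :
    applySeq p (List.replicate m (u, v)) v = p v + m := by
  induction m generalizing p with
  | zero => rfl
  | succ m ih =>
    rw [List.replicate_succ, applySeq, ih]
    simp [applyMove, huv.symm]
    omega

lemma isValidSeq_replicate {G : SimpleGraph V} {u v : V} (huv : G.Adj u v) (m : ℕ) (p : V → ℕ)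
    (hm : 2 * m ≤ p u) : IsValidSeq G p (List.replicate m (u, v)) := by
  induction m generalizing p with
  | zero => trivial
  | succ m ih =>
    refine ⟨huv, show 2 ≤ p u by omega, ih _ ?_⟩
    simp only [applyMove, if_neg huv.ne, ↓reduceIte]
    omega

lemma exists_reach_of_walk {G : SimpleGraph V} {u r : V} (w : G.Walk u r) (p : V → ℕ)
    (hu : 2 ^ w.length ≤ p u) :
    ∃ σ : List (V × V), IsValidSeq G p σ ∧ 1 ≤ applySeq p σ r := by
  induction w generalizing p with
  | nil => exact ⟨[], trivial, by simpa [applySeq] using hu⟩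
  | @cons u v r huv w ih =>
    set m := 2 ^ w.length
    rw [SimpleGraph.Walk.length_cons, pow_succ] at hu
    obtain ⟨σ, hσ, hr⟩ := ih (applySeq p (List.replicate m (u, v)))
      (by rw [applySeq_replicate_target huv.ne]; omega)
    refine ⟨List.replicate m (u, v) ++ σ, ?_, ?_⟩
    · exact (isValidSeq_replicate huv m p (by omega)).append hσ
    · rwa [applySeq_append]

lemma Fintype.exists_le_of_pred_mul_card_lt_sum {ι : Type*} [Fintype ι] (f : ι → ℕ) (k : ℕ)
    (hf : (k - 1) * Fintype.card ι < ∑ i, f i) : ∃ i, k ≤ f i := by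
  rw [mul_comm, ← smul_eq_mul, ← Finset.card_univ, ← Finset.sum_const] at hf
  obtain ⟨i, -, hi⟩ := Finset.exists_lt_of_sum_lt hf
  exact ⟨i, by omega⟩

/-- For a connected graph on `n` vertices with diameter `d`, `π(G) ≤ (2^d - 1)·n + 1`:
under every distribution of `(2^d - 1)·n + 1` pebbles, every vertex is reachable. -/
theorem pebbling_number_upper_bound [Fintype V] (G : SimpleGraph V) (hG : G.Connected)
    (d : ℕ) (hd : ∀ u v : V, G.dist u v ≤ d)
    (p : V → ℕ) (hp : ∑ v : V, p v = (2 ^ d - 1) * Fintype.card V + 1) (r : V) :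
    ∃ σ : List (V × V), IsValidSeq G p σ ∧ 1 ≤ applySeq p σ r := by
  obtain ⟨v, hv⟩ := Fintype.exists_le_of_pred_mul_card_lt_sum p (2 ^ d) (by omega)
  obtain ⟨w, hw⟩ := (hG.preconnected v r).exists_walk_length_eq_dist
  refine exists_reach_of_walk w p ?_
  calc 2 ^ w.length ≤ 2 ^ d := Nat.pow_le_pow_right two_pos (hw ▸ hd v r)
    _ ≤ p v := hv
end

section
/- If a connected graph G has a cut vertex, then π(G) > n(G): specifically, if v is a cut vertex and u, w lie in different components of G - v, then the distribution placing three pebbles on u, zero on v and w, and one pebble on every other vertex has size n(G) and does not allow placing a pebble on w. -/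
variable {V : Type*} [DecidableEq V]

section Aux

variable (G : SimpleGraph V) (v w : V)

/-- The invariant preserved by pebbling moves: `w` is empty, every vertex that can reach
`w` by a walk avoiding `v` holds at most one pebble, `v` holds at most one pebble, and if
some vertex `x ≠ v` is heavy (holds ≥ 2 pebbles) then `p x + 2 * p v ≤ 3` and every other
vertex besides `v` holds at most one pebble. -/
def PebInv (p : V → ℕ) : Prop :=
  p w = 0 ∧
  (∀ x : V, ¬ (∀ W : G.Walk x w, v ∈ W.support) → p x ≤ 1) ∧
  p v ≤ 1 ∧
  (∀ x : V, x ≠ v → 2 ≤ p x →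
    p x + 2 * p v ≤ 3 ∧ ∀ y : V, y ≠ v → y ≠ x → p y ≤ 1)

lemma pebinv_step (hvw : v ≠ w) (p : V → ℕ) (a b : V)
    (hab : G.Adj a b) (h2a : 2 ≤ p a) (hI : PebInv G v w p) :
    PebInv G v w (applyMove p a b) := by
  obtain ⟨h1, h2, h3, h4⟩ := hI
  have hPa : ∀ W : G.Walk a w, v ∈ W.support := by
    by_contra h
    have := h2 a h
    omega
  have hav : a ≠ v := by rintro rfl; omega
  have hPb : ∀ W : G.Walk b w, v ∈ W.support := by
    intro W
    by_contra hvW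
    have h := hPa (W.cons hab)
    rw [SimpleGraph.Walk.support_cons, List.mem_cons] at h
    rcases h with h | h
    · exact hav h.symm
    · exact hvW h
  have haw : a ≠ w := by rintro rfl; omega
  have hbw : b ≠ w := by
    rintro rfl
    have := hPb SimpleGraph.Walk.nil
    rw [SimpleGraph.Walk.support_nil, List.mem_singleton] at this
    exact hvw this
  obtain ⟨hpa3, hothers⟩ := h4 a hav h2a
  have hv0 : p v = 0 := by omega
  have hab' : a ≠ b := hab.ne
  have hm : ∀ x, applyMove p a b x
      = (if x = a then p x - 2 else p x) + (if x = b then 1 else 0) :=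
    fun _ => rfl
  refine ⟨?_, ?_, ?_, ?_⟩
  · rw [hm, if_neg (Ne.symm haw), if_neg (Ne.symm hbw)]
    omega
  · intro x hx
    have hxa : x ≠ a := fun h => hx (h ▸ hPa)
    have hxb : x ≠ b := fun h => hx (h ▸ hPb)
    rw [hm, if_neg hxa, if_neg hxb]
    have := h2 x hx
    omega
  · rw [hm, if_neg (Ne.symm hav)]
    by_cases h : v = b
    · rw [if_pos h]; omega
    · rw [if_neg h]; omega
  · intro x hxv hx2
    by_cases hbv : b = v
    · exfalso
      subst hbv
      rw [hm, if_neg hxv] at hx2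
      by_cases hxa : x = a
      · subst hxa; rw [if_pos rfl] at hx2; omega
      · rw [if_neg hxa] at hx2
        have := hothers x hxv hxa
        omega
    · have hx_eq_b : x = b := by
        by_contra hxb
        rw [hm, if_neg hxb] at hx2
        by_cases hxa : x = a
        · subst hxa; rw [if_pos rfl] at hx2; omega
        · rw [if_neg hxa] at hx2
          have := hothers x hxv hxa
          omega
      subst hx_eq_b
      have hpb1 : p x ≤ 1 := hothers x hbv (fun h => hab' h.symm)
      constructor
      · have e1 : applyMove p a x x = p x + 1 := by
          rw [hm, if_neg (fun h : x = a => hab' h.symm), if_pos rfl]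
        have e2 : applyMove p a x v = p v := by
          rw [hm, if_neg (Ne.symm hav), if_neg (fun h : v = x => hbv h.symm)]
          omega
        rw [e1, e2]
        omega
      · intro y hyv hyx
        rw [hm, if_neg hyx]
        by_cases hya : y = a
        · subst hya; rw [if_pos rfl]; omega
        · rw [if_neg hya]
          have := hothers y hyv hya
          omega

lemma pebinv_seq (hvw : v ≠ w) :
    ∀ (σ : List (V × V)) (p : V → ℕ), PebInv G v w p →
      IsValidSeq G p σ → PebInv G v w (applySeq p σ) := by
  intro σ
  induction σ with
  | nil => intro p hI _; exact hI
  | cons m rest ih =>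
      intro p hI hvalid
      obtain ⟨hadj, h2, hrest⟩ := hvalid
      exact ih _ (pebinv_step G v w hvw p m.1 m.2 hadj h2 hI) hrest

end Aux

/-- If `v` is a cut vertex separating `u` from `w`, then the distribution with three
pebbles on `u`, none on `v` and `w`, and one on every other vertex has size `n(G)`
and does not allow placing a pebble on `w`; hence `π(G) > n(G)`. -/
theorem cut_vertex_distribution [Fintype V] (G : SimpleGraph V) (hG : G.Connected)
    (u v w : V) (huv : u ≠ v) (hvw : v ≠ w) (huw : u ≠ w)
    (hsep : ∀ W : G.Walk u w, v ∈ W.support) :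
    (∑ x : V, (if x = u then 3 else if x = v ∨ x = w then 0 else 1)) = Fintype.card V ∧
    ¬ ∃ σ : List (V × V),
        IsValidSeq G (fun x => if x = u then 3 else if x = v ∨ x = w then 0 else 1) σ ∧
        1 ≤ applySeq (fun x => if x = u then 3 else if x = v ∨ x = w then 0 else 1) σ w := by
  classical
  set p0 : V → ℕ := fun x => if x = u then 3 else if x = v ∨ x = w then 0 else 1 with hp0
  constructor
  · -- the sum
    have hpt : ∀ x : V, (if x = u then 3 else if x = v ∨ x = w then 0 else 1)
        = ((if x = u then 2 else 0)
            + ((1 - ((if x = v then 1 else 0) + (if x = w then 1 else 0))) : ℕ)) := by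
      intro x
      by_cases h1 : x = u
      · subst h1; simp [huv, huw]
      · by_cases h2 : x = v
        · subst h2; simp [h1, hvw]
        · by_cases h3 : x = w
          · subst h3; simp [h1, h2, Ne.symm hvw]
          · simp [h1, h2, h3]
    calc (∑ x : V, (if x = u then 3 else if x = v ∨ x = w then 0 else 1))
        = ∑ x : V, ((if x = u then 2 else 0)
            + ((1 - ((if x = v then 1 else 0) + (if x = w then 1 else 0))) : ℕ)) :=
          Finset.sum_congr rfl (fun x _ => hpt x)
      _ = Fintype.card V := by
          rw [Finset.sum_add_distrib]
          have h1 : (∑ x : V, (if x = u then 2 else 0)) = 2 := by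
            rw [Finset.sum_ite_eq' Finset.univ u (fun _ => 2)]
            simp
          have hsub : ∀ x : V,
              ((1 - ((if x = v then 1 else 0) + (if x = w then 1 else 0))) : ℕ)
                = 1 - ((if x = v then 1 else 0) + (if x = w then 1 else 0)) := fun _ => rfl
          have h2 : (∑ x : V,
              ((1 - ((if x = v then 1 else 0) + (if x = w then 1 else 0))) : ℕ))
              = Fintype.card V - 2 := by
            have key : ∀ x : V,
                ((1 - ((if x = v then 1 else 0) + (if x = w then 1 else 0))) : ℕ)
                  + ((if x = v then 1 else 0) + (if x = w then 1 else 0)) = 1 := by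
              intro x
              by_cases h1 : x = v
              · subst h1; simp [hvw]
              · by_cases h2 : x = w <;> simp [h1, h2, Ne.symm hvw]
            have hsum := Finset.sum_congr rfl (fun x (_ : x ∈ Finset.univ) => key x)
            rw [Finset.sum_add_distrib, Finset.sum_add_distrib, Finset.sum_const] at hsum
            have hv1 : (∑ x : V, (if x = v then 1 else 0)) = 1 := by
              rw [Finset.sum_ite_eq' Finset.univ v (fun _ => 1)]; simp
            have hw1 : (∑ x : V, (if x = w then 1 else 0)) = 1 := by
              rw [Finset.sum_ite_eq' Finset.univ w (fun _ => 1)]; simp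
            rw [hv1, hw1] at hsum
            simp only [smul_eq_mul, mul_one, Finset.card_univ] at hsum
            omega
          rw [h1, h2]
          have hcard : 2 ≤ Fintype.card V :=
            Fintype.one_lt_card_iff_nontrivial.mpr ⟨⟨v, w, hvw⟩⟩
          omega
  · rintro ⟨σ, hvalid, hw⟩
    have hI0 : PebInv G v w p0 := by
      refine ⟨?_, ?_, ?_, ?_⟩
      · simp [hp0, Ne.symm huw]
      · intro x hx
        have hxu : x ≠ u := by
          rintro rfl
          exact hx hsep
        simp only [hp0, if_neg hxu]
        by_cases h : x = v ∨ x = w <;> simp [h]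
      · simp [hp0, Ne.symm huv]
      · intro x hxv hx2
        have hxu : x = u := by
          by_contra hxu
          simp only [hp0, if_neg hxu] at hx2
          by_cases h : x = v ∨ x = w <;> simp [h] at hx2
        subst hxu
        constructor
        · simp [hp0, Ne.symm huv, huv]
        · intro y hyv hyx
          simp only [hp0, if_neg hyx]
          by_cases h : y = v ∨ y = w <;> simp [h]
    have hIfin := pebinv_seq G v w hvw σ p0 hI0 hvalid
    have : applySeq p0 σ w = 0 := hIfin.1
    omega
end

section
/- Fix α ≥ 1, β ≥ 2 with 2(β² + 1) < 2^α, and let S = star(α, β) be the graph obtained from the star K_{1,β} by subdividing each edge into a path of length α. If p is a distribution of β·2^α pebbles on S such that for every leaf l it is possible to place 2^α pebbles on l, then p places exactly 2^α pebbles on each leaf and zero pebbles on every other vertex. -/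
variable {V : Type*} [DecidableEq V]

/-- `star(α,β)`: the star `K_{1,β}` with every edge subdivided into a path of length `α`.
`none` is the center; `some (j, i)` is the vertex at distance `i + 1` from the center on
the `j`-th path, so `some (j, α-1)` is a leaf. -/
def starGraph (α β : ℕ) : SimpleGraph (Option (Fin β × Fin α)) :=
  SimpleGraph.fromRel (fun a b =>
    match a, b with
    | none, some (_, i) => i.val = 0
    | some (j, i), some (j', i') => j = j' ∧ i.val + 1 = i'.val
    | _, _ => False)

/-!
For the leaf `ℓⱼ` of the `j`-th path, the weight `wⱼ v = 2 ^ (2α - d(v, ℓⱼ))` satisfies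
`wⱼ v ≤ 2 wⱼ u` on edges, so a move `u → v` never increases `∑ p · wⱼ`; putting `2^α`
pebbles on `ℓⱼ` therefore forces `∑ p · wⱼ ≥ 2^α · 2^(2α)`. Under `W = ∑ⱼ wⱼ` every leaf
has weight `M = 2^(2α) + β - 1` and every other vertex at most
`2^(2α-1) + (β-1) 2^α`. With only `β 2^α` pebbles, the total deficit `∑ p v (M - W v)` is at
most `β (β-1) 2^α`, which the gap condition makes smaller than the deficit of a single
non-leaf vertex. So all pebbles lie on leaves, where the `j`-th inequality now forces at
least `2^α` pebbles on `ℓⱼ`, hence exactly `2^α` on each.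
-/

lemma applyMove_add_two_mul_ite {p : V → ℕ} {u : V} (hu : 2 ≤ p u) (v x : V) :
    applyMove p u v x + 2 * (if x = u then 1 else 0) = p x + (if x = v then 1 else 0) := by
  rcases eq_or_ne x u with rfl | hxu
  · unfold applyMove; split_ifs <;> omega
  · simp [applyMove, hxu]

section Weight

variable [Fintype V] {G : SimpleGraph V} {w : V → ℕ}

lemma sum_applyMove_mul_add {p : V → ℕ} {u : V} (hu : 2 ≤ p u) (v : V) :
    ∑ x, applyMove p u v x * w x + 2 * w u = ∑ x, p x * w x + w v := by
  have key := congrArg (fun f : V → ℕ => ∑ x, f x * w x)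
    (funext (applyMove_add_two_mul_ite hu v))
  simpa [add_mul, Finset.sum_add_distrib, mul_assoc, Finset.mul_sum] using key

theorem sum_applySeq_mul_le (hw : ∀ u v, G.Adj u v → w v ≤ 2 * w u) :
    ∀ {p : V → ℕ} {σ : List (V × V)}, IsValidSeq G p σ →
      ∑ x, applySeq p σ x * w x ≤ ∑ x, p x * w x
  | _, [], _ => le_rfl
  | p, (u, v) :: σ, ⟨hadj, hu, hσ⟩ => by
    have hmove : ∑ x, applyMove p u v x * w x + 2 * w u = ∑ x, p x * w x + w v :=
      sum_applyMove_mul_add hu v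
    have hvu := hw u v hadj
    have hσ : IsValidSeq G (applyMove p u v) σ := hσ
    exact (sum_applySeq_mul_le hw hσ).trans (by omega)

theorem mul_weight_le_of_isValidSeq (hw : ∀ u v, G.Adj u v → w v ≤ 2 * w u) {p : V → ℕ}
    {σ : List (V × V)} (hσ : IsValidSeq G p σ) {t : V} {k : ℕ} (hk : k ≤ applySeq p σ t) :
    k * w t ≤ ∑ x, p x * w x :=
  calc k * w t ≤ applySeq p σ t * w t := Nat.mul_le_mul_right _ hk
    _ ≤ ∑ x, applySeq p σ x * w x :=
      Finset.single_le_sum (f := fun x => applySeq p σ x * w x) (fun _ _ => Nat.zero_le _)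
        (Finset.mem_univ t)
    _ ≤ ∑ x, p x * w x := sum_applySeq_mul_le hw hσ

end Weight

theorem eq_zero_of_sum_mul_le_sum_mul_add {ι : Type*} [Fintype ι] {p W : ι → ℕ} {M s : ℕ}
    (hW : ∀ i, W i ≤ M) (hsum : (∑ i, p i) * M ≤ ∑ i, p i * W i + s) {i : ι}
    (hi : s < M - W i) : p i = 0 := by
  have hsplit : ∑ i, p i * W i + ∑ i, p i * (M - W i) = (∑ i, p i) * M := by
    rw [← Finset.sum_add_distrib, Finset.sum_mul]
    exact Finset.sum_congr rfl fun i _ => by rw [← mul_add, Nat.add_sub_cancel' (hW i)]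
  have hsingle : p i * (M - W i) ≤ ∑ i, p i * (M - W i) :=
    Finset.single_le_sum (f := fun i => p i * (M - W i)) (fun _ _ => Nat.zero_le _)
      (Finset.mem_univ i)
  by_contra hpi
  have : M - W i ≤ p i * (M - W i) := Nat.le_mul_of_pos_left _ (Nat.pos_of_ne_zero hpi)
  omega

theorem eq_of_sum_eq_card_mul {ι : Type*} [Fintype ι] {L : ι → ℕ} {A B : ℕ}
    (hsum : ∑ j, L j = Fintype.card ι * A) (hB : Fintype.card ι * A < B)
    (h : ∀ j, A * B ≤ L j * B + ∑ j', L j') (j : ι) : L j = A := by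
  have hge : ∀ j, A ≤ L j := by
    intro j
    by_contra! hlt
    have : (L j + 1) * B ≤ A * B := Nat.mul_le_mul_right _ hlt
    linarith [h j]
  have hall := (Finset.sum_eq_sum_iff_of_le fun j (_ : j ∈ Finset.univ) => hge j).1
    (by simp [hsum])
  exact (hall j (Finset.mem_univ j)).symm

lemma sum_ite_eq_add_card_sub_one_mul {ι : Type*} [Fintype ι] [DecidableEq ι] (i : ι)
    (a b : ℕ) : ∑ j, (if i = j then a else b) = a + (Fintype.card ι - 1) * b := by
  rw [← Finset.add_sum_erase _ _ (Finset.mem_univ i), if_pos rfl,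
    Finset.sum_congr rfl fun j hj => if_neg (Finset.ne_of_mem_erase hj).symm,
    Finset.sum_const, Finset.card_erase_of_mem (Finset.mem_univ i), Finset.card_univ,
    smul_eq_mul]

section Star

variable {α β : ℕ}

/-- The pebbling weight `2 ^ (2α - d(v, ℓⱼ))`, where `ℓⱼ` is the leaf of the `j`-th path. -/
def starWeight (α β : ℕ) (j : Fin β) : Option (Fin β × Fin α) → ℕ
  | none => 2 ^ α
  | some (j', i) => if j' = j then 2 ^ (α + 1 + i) else 2 ^ (α - 1 - i)

def starLeaf (hα : 1 ≤ α) (j : Fin β) : Option (Fin β × Fin α) :=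
  some (j, ⟨α - 1, by omega⟩)

lemma starLeaf_injective (hα : 1 ≤ α) : Function.Injective (starLeaf (β := β) hα) :=
  fun a b h => by simpa [starLeaf] using h

lemma starWeight_le_two_mul (j : Fin β) {u v : Option (Fin β × Fin α)}
    (h : (starGraph α β).Adj u v) : starWeight α β j v ≤ 2 * starWeight α β j u := by
  have pow_le : ∀ a b, a ≤ b + 1 → 2 ^ a ≤ 2 * 2 ^ b := fun a b hab => by
    rw [← pow_succ']; exact Nat.pow_le_pow_right two_pos hab
  rw [starGraph, SimpleGraph.fromRel_adj] at h
  obtain ⟨-, h⟩ := h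
  rcases u with _ | ⟨j₁, i₁⟩ <;> rcases v with _ | ⟨j₂, i₂⟩ <;>
    simp only [starWeight, or_false, false_or] at h ⊢
  · split_ifs <;> apply pow_le <;> omega
  · split_ifs <;> apply pow_le <;> omega
  · obtain ⟨rfl, h⟩ | ⟨rfl, h⟩ := h <;> split_ifs <;> apply pow_le <;> omega

lemma starWeight_starLeaf (hα : 1 ≤ α) (j j' : Fin β) :
    starWeight α β j (starLeaf hα j') = if j' = j then 2 ^ (2 * α) else 1 := by
  simp only [starWeight, starLeaf]
  split_ifs
  · congr 1; omega
  · simp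

lemma sum_starWeight_starLeaf (hα : 1 ≤ α) (j' : Fin β) :
    ∑ j, starWeight α β j (starLeaf hα j') = 2 ^ (2 * α) + (β - 1) := by
  simp only [starWeight_starLeaf]
  rw [sum_ite_eq_add_card_sub_one_mul, Fintype.card_fin, mul_one]

lemma two_mul_sum_starWeight_le (hα : 1 ≤ α) {v : Option (Fin β × Fin α)}
    (hv : v ∉ Set.range (starLeaf hα)) :
    2 * ∑ j, starWeight α β j v ≤ 2 ^ (2 * α) + 2 * (β - 1) * 2 ^ α := by
  rcases v with _ | ⟨j', i⟩
  · simp only [starWeight, Finset.sum_const, Finset.card_univ, Fintype.card_fin, smul_eq_mul]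
    have : 2 * 2 ^ α ≤ 2 ^ (2 * α) := by
      rw [← pow_succ']; exact Nat.pow_le_pow_right two_pos (by omega)
    obtain _ | b := β
    · simp
    · rw [Nat.add_sub_cancel]
      linarith
  · have hi : i.val ≠ α - 1 := fun hi => hv ⟨j', by simp [starLeaf, ← hi]⟩
    simp only [starWeight]
    rw [sum_ite_eq_add_card_sub_one_mul, Fintype.card_fin]
    have h₁ : 2 * 2 ^ (α + 1 + i) ≤ 2 ^ (2 * α) := by
      rw [← pow_succ']; exact Nat.pow_le_pow_right two_pos (by omega)
    have h₂ : 2 ^ (α - 1 - i) ≤ 2 ^ α := Nat.pow_le_pow_right two_pos (by omega)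
    have := Nat.mul_le_mul_left (2 * (β - 1)) h₂
    linarith

end Star

section Concentration

variable {α β : ℕ} {p : Option (Fin β × Fin α) → ℕ}

theorem eq_zero_of_notMem_range_starLeaf (hα : 1 ≤ α) (hgap : 2 * (β ^ 2 + 1) < 2 ^ α)
    (hsize : ∑ x, p x = β * 2 ^ α)
    (hweight : ∀ j, 2 ^ α * 2 ^ (2 * α) ≤ ∑ x, p x * starWeight α β j x)
    {v : Option (Fin β × Fin α)} (hv : v ∉ Set.range (starLeaf hα)) : p v = 0 := by
  have hc : 2 * (β + 1) * (β - 1) < 2 ^ α := by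
    rcases β with _ | b
    · omega
    · rw [Nat.add_sub_cancel]; nlinarith
  have hB : 2 ^ (2 * α) = 2 ^ α * 2 ^ α := by rw [two_mul, pow_add]
  rw [hB] at hweight
  have hleaf := sum_starWeight_starLeaf (β := β) hα
  have hnonleaf := fun x => two_mul_sum_starWeight_le (β := β) hα (v := x)
  rw [hB] at hleaf hnonleaf
  set A := 2 ^ α
  set c := β - 1
  have hA : 0 < A := by positivity
  apply eq_zero_of_sum_mul_le_sum_mul_add (W := fun x => ∑ j, starWeight α β j x)
    (M := A * A + c) (s := β * A * c)
  · intro x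
    by_cases hx : x ∈ Set.range (starLeaf hα)
    · obtain ⟨j, rfl⟩ := hx
      exact (hleaf j).le
    · have := hnonleaf x hx
      nlinarith
  · calc (∑ x, p x) * (A * A + c) = ∑ _j : Fin β, A * (A * A) + β * A * c := by
          rw [hsize, Finset.sum_const, Finset.card_univ, Fintype.card_fin, smul_eq_mul]; ring
      _ ≤ ∑ j, ∑ x, p x * starWeight α β j x + β * A * c := by
          gcongr with j; exact hweight j
      _ = ∑ x, p x * ∑ j, starWeight α β j x + β * A * c := by
          rw [Finset.sum_comm]; simp only [Finset.mul_sum]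
  · rw [Nat.lt_sub_iff_add_lt]
    linarith [hnonleaf v hv, Nat.mul_lt_mul_of_pos_right hc hA]

theorem sum_mul_eq_sum_starLeaf (hα : 1 ≤ α) (hzero : ∀ v ∉ Set.range (starLeaf hα), p v = 0)
    (f : Option (Fin β × Fin α) → ℕ) :
    ∑ x, p x * f x = ∑ j, p (starLeaf hα j) * f (starLeaf hα j) :=
  (Fintype.sum_of_injective _ (starLeaf_injective hα) _ _
    (fun x hx => by rw [hzero x hx, zero_mul]) fun _ => rfl).symm

theorem apply_starLeaf_eq_two_pow (hα : 1 ≤ α) (hgap : 2 * (β ^ 2 + 1) < 2 ^ α)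
    (hsize : ∑ x, p x = β * 2 ^ α)
    (hweight : ∀ j, 2 ^ α * 2 ^ (2 * α) ≤ ∑ x, p x * starWeight α β j x)
    (hzero : ∀ v ∉ Set.range (starLeaf hα), p v = 0) (j : Fin β) :
    p (starLeaf hα j) = 2 ^ α := by
  refine eq_of_sum_eq_card_mul (L := fun j => p (starLeaf hα j)) (B := 2 ^ (2 * α)) ?_ ?_
    (fun j => ?_) j
  · have h := sum_mul_eq_sum_starLeaf hα hzero fun _ => 1
    simp only [mul_one] at h
    rw [Fintype.card_fin, ← h, hsize]
  · have : β < 2 ^ α := by nlinarith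
    rw [Fintype.card_fin, two_mul, pow_add]
    exact Nat.mul_lt_mul_of_pos_right this (by positivity)
  · calc 2 ^ α * 2 ^ (2 * α) ≤ ∑ x, p x * starWeight α β j x := hweight j
      _ = ∑ j', p (starLeaf hα j') * (if j' = j then 2 ^ (2 * α) else 1) := by
          simp only [sum_mul_eq_sum_starLeaf hα hzero, starWeight_starLeaf]
      _ ≤ ∑ j', ((if j = j' then p (starLeaf hα j') * 2 ^ (2 * α) else 0) +
            p (starLeaf hα j')) := by
          gcongr with j'
          split_ifs with h₁ h₂ h₂
          · exact Nat.le_add_right _ _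
          · exact absurd h₁.symm h₂
          · exact absurd h₂.symm h₁
          · simp
      _ = p (starLeaf hα j) * 2 ^ (2 * α) + ∑ j', p (starLeaf hα j') := by
          rw [Finset.sum_add_distrib, Finset.sum_ite_eq, if_pos (Finset.mem_univ j)]

end Concentration

/-- Star lemma: if `2(β² + 1) < 2^α` and a distribution of `β·2^α` pebbles on
`star(α,β)` can place `2^α` pebbles on every leaf, then it puts exactly `2^α` pebbles
on each leaf and none elsewhere. -/
theorem star_lemma (α β : ℕ) (hα : 1 ≤ α)
    (hgap : 2 * (β ^ 2 + 1) < 2 ^ α)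
    (p : Option (Fin β × Fin α) → ℕ)
    (hsize : ∑ x : Option (Fin β × Fin α), p x = β * 2 ^ α)
    (hreach : ∀ j : Fin β, ∃ σ : List (Option (Fin β × Fin α) × Option (Fin β × Fin α)),
      IsValidSeq (starGraph α β) p σ ∧
      2 ^ α ≤ applySeq p σ (some (j, ⟨α - 1, by omega⟩))) :
    (∀ j : Fin β, p (some (j, ⟨α - 1, by omega⟩)) = 2 ^ α) ∧
    p none = 0 ∧
    (∀ (j : Fin β) (i : Fin α), i.val ≠ α - 1 → p (some (j, i)) = 0) := by
  have hweight : ∀ j, 2 ^ α * 2 ^ (2 * α) ≤ ∑ x, p x * starWeight α β j x := fun j => by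
    obtain ⟨σ, hσ, hleaf⟩ := hreach j
    have hwj : starWeight α β j (starLeaf hα j) = 2 ^ (2 * α) := by
      rw [starWeight_starLeaf, if_pos rfl]
    exact hwj ▸ mul_weight_le_of_isValidSeq (fun _ _ => starWeight_le_two_mul j) hσ hleaf
  have hzero : ∀ v ∉ Set.range (starLeaf hα), p v = 0 :=
    fun v => eq_zero_of_notMem_range_starLeaf hα hgap hsize hweight
  refine ⟨apply_starLeaf_eq_two_pow hα hgap hsize hweight hzero, hzero none ?_,
    fun j i hi => hzero _ ?_⟩
  · rintro ⟨j, hj⟩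
    simp [starLeaf] at hj
  · rintro ⟨j', hj'⟩
    simp only [starLeaf, Option.some.injEq, Prod.mk.injEq] at hj'
    exact hi (by rw [← hj'.2])
end
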